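/- The subring of the ring of symmetric functions over ℤ[1/2] spanned by all Schur Q-functions Q_λ (λ a strict partition) is a polynomial ring on the generators Q_{(n)} for odd n ≥ 1; i.e., it equals ℤ[1/2][Q_{(1)}, Q_{(3)}, Q_{(5)}, …] and these generators are algebraically independent. -/

import Mathlib

open Finset

variable (A : Type*) [CommRing A]

/-- The complete homogeneous generating series `H(t) = 1 + h₁ t + h₂ t² + ⋯` in the
polynomial ring `A[h₁, h₂, …]` (the ring of symmetric functions), with `hₙ = X (n−1)`. -/
noncomputable def Hser : PowerSeries (MvPolynomial ℕ A) :=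
  PowerSeries.mk fun n => if n = 0 then 1 else MvPolynomial.X (n - 1)

/-- The Schur Q generating series `Q(t) = ∏ᵢ (1+xᵢt)/(1−xᵢt) = H(t)/H(−t)`. -/
noncomputable def Qser : PowerSeries (MvPolynomial ℕ A) :=
  Hser A * PowerSeries.invOfUnit (PowerSeries.rescale (-1) (Hser A)) 1

/-- The one-row Schur Q-function `Q_{(n)}`. -/
noncomputable def Qh (n : ℕ) : MvPolynomial ℕ A := PowerSeries.coeff n (Qser A)

/-- The two-row Schur Q-function
`Q_{(a,b)} = Q_a Q_b + 2 ∑_{i=1}^{b} (−1)^i Q_{a+i} Q_{b−i}`. -/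
noncomputable def Qh2 (a b : ℕ) : MvPolynomial ℕ A :=
  Qh A a * Qh A b + 2 * ∑ i ∈ Finset.Icc 1 b, (-1) ^ i * Qh A (a + i) * Qh A (b - i)

/-- Pad a list with a zero part if its length is even (so that, together with the extra
first part, the total number of parts becomes even). -/
def padList (l : List ℕ) : List ℕ := if Even l.length then l ++ [0] else l

/-- The Schur Q-function `Q_λ` of a strict partition `λ`, defined by the Pfaffian expansion
along the first row: for `λ = (λ₁ > λ₂ > ⋯ > λ_{2k} ≥ 0)` (padding with a zero part so that
the number of parts is even), `Q_λ = ∑_j (−1)^j Q_{(λ₁,λ_j)} Q_{λ ∖ {λ₁,λ_j}}`. -/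
noncomputable def Qlam : List ℕ → MvPolynomial ℕ A
  | [] => 1
  | [a] => Qh A a
  | a :: l =>
      ∑ j : Fin (padList l).length,
        (-1) ^ (j : ℕ) * Qh2 A a ((padList l).get j) * Qlam ((padList l).eraseIdx j)
  termination_by l => l.length
  decreasing_by
    have hj2 : (j : ℕ) < (padList l).length := j.isLt
    have hlen : (padList l).length ≤ l.length + 1 := by
      simp only [padList]; split <;> simp
    simp only [List.length_eraseIdx, List.length_cons]
    rw [if_pos hj2]
    omega

/-!
Since `Q(t) = H(t)/H(-t)`, we have `Q(t) Q(-t) = 1`, i.e. `∑_{r+s=n} (-1)^s Q_r Q_s = 0` for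
`n > 0`. In degree `2m` this expresses `2 Q_{2m}` through products of lower `Q_r`, so once `2` is
invertible every `Q_n`, and hence every Pfaffian `Q_λ`, lies in `A[Q_1, Q_3, …]`.

Conversely, grade the products `Q_ν = ∏ Q_{ν_i}` of degree `d = ∑ ν_i` by the weight
`∑ ν_i² ≤ d²`. Expanding `Q_λ` along its first row and using
`Q_{(a,b)} = Q_a Q_b + 2 ∑ (-1)^i Q_{a+i} Q_{b-i}` shows `Q_λ ≡ Q_{λ₁} Q_{λ₂} ⋯` modulo products
of larger weight, and the relation in degree `2a` writes `Q_a²`, hence any product with a repeated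
part, as a combination of products of larger weight. Induction on `d² - weight` puts every product,
hence all of `A[Q_1, Q_3, …]`, into the span of the `Q_λ`.

Finally `Q_{2k+1} = 2 h_{2k+1} + (a polynomial in h_1, …, h_{2k})`, so solving for `h_{2k+1}`
recursively defines a left inverse of evaluation at the odd `Q_n`.
-/

open PowerSeries

lemma aeval_eq_aeval_of_mem_supported {σ R S : Type*} [CommSemiring R] [CommSemiring S]
    [Algebra R S] {s : Set σ} {f g : σ → S} (hfg : Set.EqOn f g s) {p : MvPolynomial σ R}
    (hp : p ∈ MvPolynomial.supported R s) : MvPolynomial.aeval f p = MvPolynomial.aeval g p := by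
  induction hp using Algebra.adjoin_induction with
  | mem x hx => obtain ⟨j, hj, rfl⟩ := hx; simp [hfg hj]
  | algebraMap a => simp
  | add x y _ _ hx hy => simp [hx, hy]
  | mul x y _ _ hx hy => simp [hx, hy]

lemma two_mul_invOf_two_smul {S R : Type*} [CommSemiring S] [Invertible (2 : S)] [Semiring R]
    [Algebra S R] (y : R) : 2 * (⅟(2 : S) • y) = y := by
  rw [Algebra.smul_def, ← mul_assoc, ← map_ofNat (algebraMap S R) 2, ← map_mul, mul_invOf_self,
    map_one, one_mul]

lemma neg_one_pow_mul_mem {R σ : Type*} [Ring R] [SetLike σ R] [AddSubgroupClass σ R] {M : σ}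
    {z : R} (hz : z ∈ M) (i : ℕ) : (-1) ^ i * z ∈ M := by
  rcases neg_one_pow_eq_or R i with h | h <;> simp [h, hz]

lemma sum_fin_neg_one_pow_of_odd {R : Type*} [Ring R] {n : ℕ} (hn : Odd n) :
    ∑ j : Fin n, (-1 : R) ^ (j : ℕ) = 1 := by
  rw [Fin.sum_univ_eq_sum_range (fun j => (-1 : R) ^ j), neg_one_geom_sum,
    if_neg (Nat.not_even_iff_odd.mpr hn)]

lemma constantCoeff_Hser : constantCoeff (Hser A) = 1 := by
  simp [Hser, ← coeff_zero_eq_constantCoeff_apply]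

noncomputable def HnegInv : PowerSeries (MvPolynomial ℕ A) :=
  invOfUnit (rescale (-1) (Hser A)) 1

lemma Qser_eq_Hser_mul_HnegInv : Qser A = Hser A * HnegInv A := rfl

lemma rescale_Hser_mul_HnegInv : rescale (-1) (Hser A) * HnegInv A = 1 :=
  mul_invOfUnit _ _ (by simp [← coeff_zero_eq_constantCoeff_apply, coeff_rescale, Hser])

lemma Qser_mul_rescale_Qser : Qser A * rescale (-1) (Qser A) = 1 := by
  have h := congrArg (rescale (-1)) (rescale_Hser_mul_HnegInv A)
  rw [map_mul, map_one, rescale_rescale, neg_one_mul, neg_neg, rescale_one,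
    RingHom.id_apply] at h
  calc Qser A * rescale (-1) (Qser A)
      = (rescale (-1) (Hser A) * HnegInv A) * (Hser A * rescale (-1) (HnegInv A)) := by
        rw [Qser_eq_Hser_mul_HnegInv, map_mul]; ring
    _ = 1 := by rw [rescale_Hser_mul_HnegInv, h, one_mul]

@[simp] lemma Qh_zero : Qh A 0 = 1 := by
  simp [Qh, Qser_eq_Hser_mul_HnegInv, HnegInv, constantCoeff_Hser]

lemma sum_antidiagonal_neg_one_pow_mul_Qh_mul_Qh {n : ℕ} (hn : n ≠ 0) :
    ∑ p ∈ antidiagonal n, (-1) ^ p.2 * Qh A p.1 * Qh A p.2 = 0 := by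
  have h := congrArg (coeff n) (Qser_mul_rescale_Qser A)
  rw [coeff_mul, coeff_one, if_neg hn] at h
  rw [← h]
  refine Finset.sum_congr rfl fun p _ => ?_
  rw [coeff_rescale, Qh, Qh]
  ring

lemma coeff_zero_HnegInv : coeff 0 (HnegInv A) = 1 := by
  simp [HnegInv]

lemma coeff_succ_HnegInv (m : ℕ) :
    coeff (m + 1) (HnegInv A) =
      ∑ i ∈ range (m + 1), (-1) ^ i * MvPolynomial.X i * coeff (m - i) (HnegInv A) := by
  have h := congrArg (coeff (m + 1)) (rescale_Hser_mul_HnegInv A)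
  rw [coeff_mul, coeff_one, if_neg m.succ_ne_zero, Nat.sum_antidiagonal_eq_sum_range_succ_mk,
    sum_range_succ'] at h
  simp only [coeff_rescale, Hser, coeff_mk, Nat.succ_ne_zero, if_false, if_true,
    Nat.add_sub_add_right, add_tsub_cancel_right, pow_zero, mul_one, one_mul, Nat.sub_zero] at h
  rw [← sub_eq_zero, ← h, sub_eq_add_neg, add_comm, ← sum_neg_distrib]
  congr 1
  refine sum_congr rfl fun i _ => ?_
  ring

lemma coeff_HnegInv_mem_supported (n : ℕ) :
    coeff n (HnegInv A) ∈ MvPolynomial.supported A (Set.Iio n) := by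
  induction n using Nat.strong_induction_on with
  | _ n ih =>
    rcases n with _ | m
    · rw [coeff_zero_HnegInv]; exact one_mem _
    rw [coeff_succ_HnegInv]
    refine sum_mem fun i hi => mul_mem (mul_mem (pow_mem (neg_mem (one_mem _)) _)
      (Algebra.subset_adjoin ⟨i, by simpa [Nat.lt_succ_iff] using hi, rfl⟩)) ?_
    exact MvPolynomial.supported_mono (Set.Iio_subset_Iio (by omega)) (ih (m - i) (by omega))

lemma coeff_succ_HnegInv_sub_mem_supported (m : ℕ) :
    coeff (m + 1) (HnegInv A) - (-1) ^ m * MvPolynomial.X m ∈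
      MvPolynomial.supported A (Set.Iio m) := by
  rw [coeff_succ_HnegInv, sum_range_succ, Nat.sub_self, coeff_zero_HnegInv, mul_one,
    add_sub_cancel_right]
  refine sum_mem fun i hi => mul_mem (mul_mem (pow_mem (neg_mem (one_mem _)) _)
    (Algebra.subset_adjoin ⟨i, mem_range.mp hi, rfl⟩)) ?_
  exact MvPolynomial.supported_mono (Set.Iio_subset_Iio (by omega))
    (coeff_HnegInv_mem_supported A _)

lemma Qh_succ_sub_two_mul_X_mem_supported {m : ℕ} (hm : Even m) :
    Qh A (m + 1) - 2 * MvPolynomial.X m ∈ MvPolynomial.supported A (Set.Iio m) := by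
  rw [Qh, Qser_eq_Hser_mul_HnegInv, coeff_mul, Nat.sum_antidiagonal_eq_sum_range_succ_mk,
    sum_range_succ', sum_range_succ]
  simp only [Hser, coeff_mk, Nat.succ_ne_zero, if_false, if_true, add_tsub_cancel_right,
    Nat.sub_zero, Nat.add_sub_add_right, Nat.sub_self, one_mul]
  have hlead := coeff_succ_HnegInv_sub_mem_supported A m
  rw [hm.neg_one_pow, one_mul] at hlead
  rw [coeff_zero_HnegInv, mul_one,
    show ∀ s x g : MvPolynomial ℕ A, s + x + g - 2 * x = (g - x) + s by intros; ring]
  refine add_mem hlead (sum_mem fun i hi => mul_mem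
    (Algebra.subset_adjoin ⟨i, mem_range.mp hi, rfl⟩) ?_)
  exact MvPolynomial.supported_mono (Set.Iio_subset_Iio (by omega))
    (coeff_HnegInv_mem_supported A _)

-- Solves `Q_{k+1} = 2 h_{k+1} + (terms in h_1, …, h_k)` for `h_{k+1} = X k` when `k + 1` is odd.
noncomputable def hPreimage [Invertible (2 : A)] : ℕ → MvPolynomial {n : ℕ // Odd n} A
  | k =>
    if h : Odd (k + 1) then
      ⅟(2 : A) • (MvPolynomial.X ⟨k + 1, h⟩ - MvPolynomial.aeval
        (fun j => if _ : j < k then hPreimage j else 0) (Qh A (k + 1) - 2 * MvPolynomial.X k))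
    else 0

lemma aeval_hPreimage_Qh [Invertible (2 : A)] {n : ℕ} (hn : Odd n) :
    MvPolynomial.aeval (hPreimage A) (Qh A n) = MvPolynomial.X ⟨n, hn⟩ := by
  obtain ⟨m, rfl⟩ : ∃ m, n = m + 1 := ⟨n - 1, by have := hn.pos; omega⟩
  have hlow := Qh_succ_sub_two_mul_X_mem_supported A (by simpa [Nat.odd_add_one] using hn)
  set r := Qh A (m + 1) - 2 * MvPolynomial.X m
  have hrec : hPreimage A m =
      ⅟(2 : A) • (MvPolynomial.X ⟨m + 1, hn⟩ - MvPolynomial.aeval (hPreimage A) r) := by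
    rw [hPreimage, dif_pos hn,
      aeval_eq_aeval_of_mem_supported (g := hPreimage A) (fun _ hj => by simp [hj.out]) hlow]
  have hQ : Qh A (m + 1) = r + 2 * MvPolynomial.X m := by ring
  rw [hQ, map_add, map_mul, map_ofNat, MvPolynomial.aeval_X, hrec, two_mul_invOf_two_smul,
    add_sub_cancel]

theorem algebraicIndependent_Qh_odd [Invertible (2 : A)] :
    AlgebraicIndependent A fun n : {n : ℕ // Odd n} => Qh A n := by
  have hinv : (MvPolynomial.aeval (hPreimage A)).comp
      (MvPolynomial.aeval fun n : {n : ℕ // Odd n} => Qh A n) = AlgHom.id A _ :=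
    MvPolynomial.algHom_ext fun n => by simpa using aeval_hPreimage_Qh A n.2
  exact Function.LeftInverse.injective (g := MvPolynomial.aeval (hPreimage A))
    (AlgHom.congr_fun hinv)

lemma two_mul_Qh_of_even {m : ℕ} (hm : Even m) :
    2 * Qh A (m + 2) =
      -∑ i ∈ range (m + 1), (-1) ^ (m + 1 - i) * Qh A (i + 1) * Qh A (m + 1 - i) := by
  have h := sum_antidiagonal_neg_one_pow_mul_Qh_mul_Qh A (n := m + 2) (by omega)
  rw [Nat.sum_antidiagonal_eq_sum_range_succ_mk, sum_range_succ', sum_range_succ] at h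
  have hsub : ∀ i, m + 2 - (i + 1) = m + 1 - i := fun i => by omega
  simp only [Nat.sub_zero, Nat.sub_self, hsub, Qh_zero, pow_zero,
    (hm.add even_two).neg_one_pow] at h
  linear_combination h

lemma Qh_mem_of_forall_odd [Invertible (2 : A)] {S : Subalgebra A (MvPolynomial ℕ A)}
    (hS : ∀ n, Odd n → Qh A n ∈ S) (n : ℕ) : Qh A n ∈ S := by
  induction n using Nat.strong_induction_on with
  | _ n ih =>
    rcases Nat.even_or_odd n with hn | hn
    · obtain rfl | ⟨m, rfl⟩ : n = 0 ∨ ∃ m, n = m + 2 := by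
        rcases n with _ | _ | m
        · exact .inl rfl
        · exact absurd hn (by decide)
        · exact .inr ⟨m, rfl⟩
      · rw [Qh_zero]; exact one_mem _
      rw [← two_mul_invOf_two_smul (S := A) (Qh A (m + 2)), mul_smul_comm,
        two_mul_Qh_of_even A (by simpa [Nat.even_add] using hn)]
      refine S.smul_mem (neg_mem (sum_mem fun i hi => ?_)) _
      have hi := mem_range.mp hi
      exact mul_mem (mul_mem (pow_mem (neg_mem (one_mem _)) _) (ih _ (by omega)))
        (ih _ (by omega))
    · exact hS n hn

lemma Qh2_mem {S : Subalgebra A (MvPolynomial ℕ A)} (hS : ∀ n, Qh A n ∈ S) (a b : ℕ) :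
    Qh2 A a b ∈ S :=
  add_mem (mul_mem (hS a) (hS b)) (mul_mem (ofNat_mem S 2) (sum_mem fun _ _ =>
    mul_mem (mul_mem (pow_mem (neg_mem (one_mem _)) _) (hS _)) (hS _)))

lemma Qlam_cons_cons (a b : ℕ) (l : List ℕ) :
    Qlam A (a :: b :: l) = ∑ j : Fin (padList (b :: l)).length,
      (-1) ^ (j : ℕ) * Qh2 A a ((padList (b :: l)).get j) *
        Qlam A ((padList (b :: l)).eraseIdx j) := by
  rw [Qlam]
  all_goals simp

lemma length_padList_le (l : List ℕ) : (padList l).length ≤ l.length + 1 := by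
  unfold padList; split <;> simp

lemma Qlam_mem {S : Subalgebra A (MvPolynomial ℕ A)} (hS : ∀ n, Qh A n ∈ S) :
    ∀ l : List ℕ, Qlam A l ∈ S
  | [] => by rw [Qlam]; exact one_mem _
  | [a] => by rw [Qlam]; exact hS a
  | a :: b :: l => by
    rw [Qlam_cons_cons]
    exact sum_mem fun j _ => mul_mem (mul_mem (pow_mem (neg_mem (one_mem _)) _)
      (Qh2_mem A hS _ _)) (Qlam_mem hS _)
termination_by l => l.length
decreasing_by
  have := length_padList_le (b :: l)
  simp only [List.length_eraseIdx, j.isLt, if_true, List.length_cons] at this ⊢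
  omega

noncomputable def Qprod (ν : Multiset ℕ) : MvPolynomial ℕ A := (ν.map (Qh A)).prod

def sqWeight (ν : Multiset ℕ) : ℕ := (ν.map (· ^ 2)).sum

@[simp] lemma Qprod_zero : Qprod A 0 = 1 := rfl

@[simp] lemma Qprod_singleton (a : ℕ) : Qprod A {a} = Qh A a := by
  simp [Qprod]

@[simp] lemma Qprod_cons (a : ℕ) (ν : Multiset ℕ) :
    Qprod A (a ::ₘ ν) = Qh A a * Qprod A ν := by
  simp [Qprod]

@[simp] lemma Qprod_add (μ ν : Multiset ℕ) : Qprod A (μ + ν) = Qprod A μ * Qprod A ν := by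
  simp [Qprod]

@[simp] lemma sqWeight_zero : sqWeight 0 = 0 := rfl

@[simp] lemma sqWeight_singleton (a : ℕ) : sqWeight {a} = a ^ 2 := by
  simp [sqWeight]

@[simp] lemma sqWeight_cons (a : ℕ) (ν : Multiset ℕ) :
    sqWeight (a ::ₘ ν) = a ^ 2 + sqWeight ν := by
  simp [sqWeight]

@[simp] lemma sqWeight_add (μ ν : Multiset ℕ) :
    sqWeight (μ + ν) = sqWeight μ + sqWeight ν := by
  simp [sqWeight]

lemma sqWeight_le_sq_sum (ν : Multiset ℕ) : sqWeight ν ≤ ν.sum ^ 2 := by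
  induction ν using Multiset.induction with
  | empty => simp
  | cons a ν ih =>
    rw [sqWeight_cons, Multiset.sum_cons, add_sq]
    omega

noncomputable def QprodSpan (d w : ℕ) : Submodule A (MvPolynomial ℕ A) :=
  Submodule.span A {x | ∃ ν : Multiset ℕ, ν.sum = d ∧ w ≤ sqWeight ν ∧ x = Qprod A ν}

lemma Qprod_mem_QprodSpan {ν : Multiset ℕ} {w : ℕ} (hw : w ≤ sqWeight ν) :
    Qprod A ν ∈ QprodSpan A ν.sum w :=
  Submodule.subset_span ⟨ν, rfl, hw, rfl⟩

lemma QprodSpan_anti (d : ℕ) : Antitone (QprodSpan A d) :=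
  fun _ _ h => Submodule.span_mono fun _ ⟨ν, hd, hw, hx⟩ => ⟨ν, hd, h.trans hw, hx⟩

lemma mul_mem_QprodSpan {d₁ d₂ d w₁ w₂ w : ℕ} {x y : MvPolynomial ℕ A}
    (hx : x ∈ QprodSpan A d₁ w₁) (hy : y ∈ QprodSpan A d₂ w₂) (hd : d₁ + d₂ = d)
    (hw : w ≤ w₁ + w₂) : x * y ∈ QprodSpan A d w := by
  have hxy := Submodule.mul_mem_mul hx hy
  rw [QprodSpan, QprodSpan, Submodule.span_mul_span] at hxy
  refine Submodule.span_mono ?_ hxy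
  rintro _ ⟨_, ⟨μ, rfl, hμ, rfl⟩, _, ⟨ν, rfl, hν, rfl⟩, rfl⟩
  exact ⟨μ + ν, by simp [hd], by simp; omega, (Qprod_add A μ ν).symm⟩

lemma Qh_mul_Qh_mem_QprodSpan {i j d w : ℕ} (hd : i + j = d) (hw : w ≤ i ^ 2 + j ^ 2) :
    Qh A i * Qh A j ∈ QprodSpan A d w := by
  subst hd
  simpa using Qprod_mem_QprodSpan A (ν := {i, j}) (by simpa using hw)

lemma Qh_mul_Qh_sub_Qh2_mem_QprodSpan {a b : ℕ} (hba : b ≤ a) :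
    Qh A a * Qh A b - Qh2 A a b ∈ QprodSpan A (a + b) (a ^ 2 + b ^ 2 + 1) := by
  have hsum : ∑ i ∈ Icc 1 b, (-1) ^ i * Qh A (a + i) * Qh A (b - i) ∈
      QprodSpan A (a + b) (a ^ 2 + b ^ 2 + 1) := by
    refine sum_mem fun i hi => ?_
    obtain ⟨hi1, hib⟩ := mem_Icc.mp hi
    rw [mul_assoc]
    refine neg_one_pow_mul_mem (Qh_mul_Qh_mem_QprodSpan A (by omega) ?_) i
    obtain ⟨c, rfl⟩ : ∃ c, b = c + i := ⟨b - i, by omega⟩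
    rw [Nat.add_sub_cancel]
    nlinarith
  rw [Qh2, sub_add_cancel_left, two_mul]
  exact neg_mem (add_mem hsum hsum)

lemma Qh_mul_self_mem_QprodSpan {a : ℕ} (ha : 0 < a) :
    Qh A a * Qh A a ∈ QprodSpan A (2 * a) (2 * a ^ 2 + 1) := by
  have h := sum_antidiagonal_neg_one_pow_mul_Qh_mul_Qh A (n := 2 * a) (by omega)
  rw [Nat.sum_antidiagonal_eq_sum_range_succ_mk,
    ← sum_erase_add _ _ (mem_range.mpr (by omega : a < 2 * a + 1)),
    show 2 * a - a = a by omega] at h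
  have hsq : ((-1 : MvPolynomial ℕ A) ^ a) * (-1) ^ a = 1 := by
    rw [← pow_add, ← two_mul, pow_mul, neg_one_sq, one_pow]
  rw [show Qh A a * Qh A a = -((-1) ^ a * ∑ k ∈ (range (2 * a + 1)).erase a,
      (-1) ^ (2 * a - k) * Qh A k * Qh A (2 * a - k)) by
    linear_combination (-1) ^ a * h - Qh A a * Qh A a * hsq]
  refine neg_mem (neg_one_pow_mul_mem (sum_mem fun k hk => ?_) _)
  obtain ⟨hka, hk⟩ := mem_erase.mp hk
  rw [mul_assoc]
  have hk2 := mem_range.mp hk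
  refine neg_one_pow_mul_mem (Qh_mul_Qh_mem_QprodSpan A (by omega) ?_) _
  obtain ⟨c, hc⟩ : ∃ c, 2 * a - k = c := ⟨_, rfl⟩
  have hkc : k + c = 2 * a := by omega
  rw [hc]
  rcases lt_or_gt_of_ne hka with h | h <;> nlinarith

lemma Qh2_mul_sub_mem_QprodSpan {a b d w : ℕ} (hba : b ≤ a) {y z : MvPolynomial ℕ A}
    (hz : z ∈ QprodSpan A d w) (hyz : y - z ∈ QprodSpan A d (w + 1)) :
    Qh2 A a b * y - Qh A a * Qh A b * z ∈ QprodSpan A (a + b + d) (a ^ 2 + b ^ 2 + w + 1) := by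
  have hy : y ∈ QprodSpan A d w := by
    simpa using add_mem hz (QprodSpan_anti A d (Nat.le_succ w) hyz)
  rw [show Qh2 A a b * y - Qh A a * Qh A b * z
      = Qh A a * Qh A b * (y - z) - (Qh A a * Qh A b - Qh2 A a b) * y by ring]
  exact sub_mem (mul_mem_QprodSpan A (Qh_mul_Qh_mem_QprodSpan A rfl le_rfl) hyz rfl (by omega))
    (mul_mem_QprodSpan A (Qh_mul_Qh_sub_Qh2_mem_QprodSpan A hba) hy rfl (by omega))

lemma coe_padList (l : List ℕ) :
    (padList l : Multiset ℕ) = l ∨ (padList l : Multiset ℕ) = 0 ::ₘ l := by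
  unfold padList
  split
  · exact .inr (Multiset.coe_eq_coe.mpr (List.perm_append_singleton 0 l))
  · exact .inl rfl

lemma Qprod_padList (l : List ℕ) : Qprod A (padList l) = Qprod A l := by
  rcases coe_padList l with h | h <;> rw [h]
  rw [Qprod_cons, Qh_zero, one_mul]

lemma sum_padList (l : List ℕ) : (padList l : Multiset ℕ).sum = (l : Multiset ℕ).sum := by
  rcases coe_padList l with h | h <;> rw [h]
  rw [Multiset.sum_cons, zero_add]

lemma sqWeight_padList (l : List ℕ) : sqWeight (padList l) = sqWeight l := by
  rcases coe_padList l with h | h <;> rw [h]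
  rw [sqWeight_cons, zero_pow two_ne_zero, zero_add]

lemma odd_length_padList (l : List ℕ) : Odd (padList l).length := by
  unfold padList
  split <;> simp_all

lemma List.Pairwise.padList {l : List ℕ} (h : l.Pairwise (· ≥ ·)) :
    (padList l).Pairwise (· ≥ ·) := by
  unfold _root_.padList
  split
  · exact List.pairwise_append.mpr ⟨h, by simp, by simp⟩
  · exact h

lemma mem_padList {x : ℕ} {l : List ℕ} (hx : x ∈ padList l) : x ∈ l ∨ x = 0 := by
  unfold padList at hx
  split at hx <;> simp_all

theorem Qlam_sub_Qprod_mem_QprodSpan : ∀ l : List ℕ, l.Pairwise (· ≥ ·) →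
    Qlam A l - Qprod A l ∈ QprodSpan A (l : Multiset ℕ).sum (sqWeight l + 1)
  | [], _ => by simp [Qlam]
  | [a], _ => by simp [Qlam]
  | a :: b :: t, hl => by
    rw [Qlam_cons_cons]
    set l' := padList (b :: t) with hl'
    have hterm (j : Fin l'.length) :
        Qh2 A a (l'.get j) * Qlam A (l'.eraseIdx j) - Qprod A (a :: b :: t) ∈
          QprodSpan A (a :: b :: t : Multiset ℕ).sum (sqWeight (a :: b :: t) + 1) := by
      have hperm : (l' : Multiset ℕ) = l'.get j ::ₘ (l'.eraseIdx j : Multiset ℕ) := by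
        rw [Multiset.cons_coe, Multiset.coe_eq_coe]
        exact (List.getElem_cons_eraseIdx_perm j.isLt).symm
      have hcoe : ((a :: b :: t : List ℕ) : Multiset ℕ) = a ::ₘ (b :: t : Multiset ℕ) := rfl
      have hja : l'.get j ≤ a := by
        rcases mem_padList (List.get_mem l' j) with h | h
        · exact List.rel_of_pairwise_cons hl h
        · omega
      have key := Qh2_mul_sub_mem_QprodSpan A hja (Qprod_mem_QprodSpan A le_rfl)
        (Qlam_sub_Qprod_mem_QprodSpan (l'.eraseIdx j)
          (hl.of_cons.padList.sublist (List.eraseIdx_sublist _ _)))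
      rw [hcoe, Qprod_cons, Multiset.sum_cons, sqWeight_cons, ← Qprod_padList, ← sum_padList,
        ← sqWeight_padList, ← hl', hperm, Qprod_cons, Multiset.sum_cons, sqWeight_cons,
        ← mul_assoc, ← add_assoc, ← add_assoc]
      exact key
    have hodd : Odd l'.length := odd_length_padList _
    have hsum := sum_mem fun j (_ : j ∈ univ) => neg_one_pow_mul_mem (hterm j) (j : ℕ)
    simpa only [mul_sub, sum_sub_distrib, ← sum_mul, sum_fin_neg_one_pow_of_odd hodd, one_mul,
      mul_assoc] using hsum
termination_by l => l.length
decreasing_by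
  have := length_padList_le (b :: t)
  have := j.isLt
  simp only [List.length_eraseIdx, List.length_cons] at *
  split_ifs <;> omega

lemma Qprod_filter_pos (ν : Multiset ℕ) : Qprod A (ν.filter (0 < ·)) = Qprod A ν := by
  induction ν using Multiset.induction with
  | empty => rfl
  | cons a ν ih => rcases Nat.eq_zero_or_pos a with rfl | ha <;> simp [*]

lemma sum_filter_pos (ν : Multiset ℕ) : (ν.filter (0 < ·)).sum = ν.sum := by
  induction ν using Multiset.induction with
  | empty => rfl
  | cons a ν ih => rcases Nat.eq_zero_or_pos a with rfl | ha <;> simp [*]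

lemma sqWeight_filter_pos (ν : Multiset ℕ) : sqWeight (ν.filter (0 < ·)) = sqWeight ν := by
  induction ν using Multiset.induction with
  | empty => rfl
  | cons a ν ih => rcases Nat.eq_zero_or_pos a with rfl | ha <;> simp [*]

noncomputable def QlamSpan : Submodule A (MvPolynomial ℕ A) :=
  Submodule.span A {x | ∃ l : List ℕ, l.IsChain (· > ·) ∧ (∀ a ∈ l, 0 < a) ∧ x = Qlam A l}

lemma Qprod_mem_QlamSpan_sup_QprodSpan {ν : Multiset ℕ} (hν : ∀ a ∈ ν, 0 < a) :
    Qprod A ν ∈ QlamSpan A ⊔ QprodSpan A ν.sum (sqWeight ν + 1) := by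
  by_cases hnd : ν.Nodup
  · set l := ν.sort (· ≥ ·)
    have hl : (l : Multiset ℕ) = ν := Multiset.sort_eq _ _
    have hge : l.Pairwise (· ≥ ·) := Multiset.pairwise_sort _ _
    have hgt : l.IsChain (· > ·) := List.Pairwise.isChain <|
      (hge.and (Multiset.coe_nodup.mp (hl ▸ hnd))).imp fun h => lt_of_le_of_ne h.1 h.2.symm
    have hQlam : Qlam A l ∈ QlamSpan A :=
      Submodule.subset_span ⟨l, hgt, fun a ha => hν a (hl ▸ ha), rfl⟩
    have htri := Qlam_sub_Qprod_mem_QprodSpan A l hge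
    rw [hl] at htri
    rw [← sub_sub_cancel (Qlam A l) (Qprod A ν)]
    exact sub_mem (Submodule.mem_sup_left hQlam) (Submodule.mem_sup_right htri)
  · obtain ⟨a, ρ, rfl⟩ : ∃ a ρ, ν = a ::ₘ a ::ₘ ρ := by
      simpa [Multiset.nodup_iff_ne_cons_cons] using hnd
    refine Submodule.mem_sup_right ?_
    rw [Qprod_cons, Qprod_cons, ← mul_assoc]
    exact mul_mem_QprodSpan A (Qh_mul_self_mem_QprodSpan A (hν a (by simp)))
      (Qprod_mem_QprodSpan A le_rfl) (by simp; ring) (by simp; ring_nf; omega)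

theorem Qprod_mem_QlamSpan (ν : Multiset ℕ) : Qprod A ν ∈ QlamSpan A := by
  induction hk : ν.sum ^ 2 - sqWeight ν using Nat.strong_induction_on generalizing ν with
  | _ k ih =>
    have hhigher : QprodSpan A ν.sum (sqWeight ν + 1) ≤ QlamSpan A := by
      rw [QprodSpan, Submodule.span_le]
      rintro _ ⟨μ, hμ, hw, rfl⟩
      have := sqWeight_le_sq_sum μ
      exact ih _ (by rw [hμ] at this ⊢; omega) μ rfl
    have h := Qprod_mem_QlamSpan_sup_QprodSpan A (ν := ν.filter (0 < ·))
      fun a ha => (Multiset.mem_filter.mp ha).2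
    rwa [Qprod_filter_pos, sum_filter_pos, sqWeight_filter_pos, sup_eq_left.mpr hhigher] at h

lemma exists_Qprod_eq_of_mem_closure {S : Set (MvPolynomial ℕ A)}
    (hS : ∀ y ∈ S, ∃ n, y = Qh A n) {x : MvPolynomial ℕ A} (hx : x ∈ Submonoid.closure S) : ∃ ν, x = Qprod A ν := by
  induction hx using Submonoid.closure_induction with
  | mem y hy => obtain ⟨n, rfl⟩ := hS y hy; exact ⟨{n}, (Qprod_singleton A n).symm⟩
  | one => exact ⟨0, rfl⟩
  | mul y z _ _ hy hz =>
    obtain ⟨μ, rfl⟩ := hy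
    obtain ⟨ν, rfl⟩ := hz
    exact ⟨μ + ν, (Qprod_add A μ ν).symm⟩

/-- Over `ℤ[1/2]` (equivalently, over any commutative ring `A` in which `2`
is invertible), the subring of the ring of symmetric functions spanned by all Schur
Q-functions `Q_λ` (`λ` a strict partition) is a polynomial ring on the generators `Q_{(n)}`
for odd `n ≥ 1`: it coincides with `A[Q_{(1)}, Q_{(3)}, Q_{(5)}, …]`, and these generators
are algebraically independent. -/
theorem stmt14 (A : Type*) [CommRing A] [Invertible (2 : A)] :
    Submodule.span A {x : MvPolynomial ℕ A |
        ∃ l : List ℕ, l.Chain' (· > ·) ∧ (∀ a ∈ l, 0 < a) ∧ x = Qlam A l}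
      = Subalgebra.toSubmodule
          (Algebra.adjoin A {x : MvPolynomial ℕ A | ∃ n : ℕ, Odd n ∧ x = Qh A n}) ∧
    AlgebraicIndependent A (fun n : {n : ℕ // Odd n} => Qh A (n : ℕ)) := by
  refine ⟨le_antisymm ?_ ?_, algebraicIndependent_Qh_odd A⟩
  · rw [Submodule.span_le]
    rintro _ ⟨l, -, -, rfl⟩
    refine Qlam_mem A (Qh_mem_of_forall_odd A fun n hn => ?_) l
    exact Algebra.subset_adjoin ⟨n, hn, rfl⟩
  · rw [Algebra.adjoin_eq_span, Submodule.span_le]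
    intro x hx
    obtain ⟨ν, rfl⟩ := exists_Qprod_eq_of_mem_closure A
      (by rintro _ ⟨n, -, rfl⟩; exact ⟨n, rfl⟩) hx
    exact Qprod_mem_QlamSpan A ν
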